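/- Let d ≥ 2 and let u ∈ [0,1]^d with u_i ≤ u_j whenever i ≤ j. Then for any d-copula C and any permutation π ∈ S_d: |C(u) − C(u_π)| ≤ Σ_{i = ⌈d/2⌉+1}^{d} (u_i − u_1), where ⌈a⌉ is the smallest integer n ≥ a. -/

import Mathlib

/-!
A copula is nondecreasing in each coordinate (a one-dimensional volume) and its increment in one
coordinate grows when the other coordinates are raised to `1` (a two-dimensional volume), where
the margins make it exactly the increment of the argument. Hence `0 ≤ C w - C v ≤ ∑ (w - v)` for
`v ≤ w`, and with `z = min u (u ∘ π)` both `C u` and `C (u ∘ π)` lie in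
`[C z, C z + ∑ (u - z)]`.

Writing `A = {k | u (π k) < u k}`, the sum `∑ (u - z)` equals `∑_{A \ πA} u - ∑_{πA \ A} u`.
These two sets are disjoint and equinumerous, so they have at most `⌊d/2⌋` elements, and by
monotonicity of `u` the difference is at most the sum of the `⌊d/2⌋` largest increments
`u i - u 0`.
-/

/-- A `d`-copula: a function `C : [0,1]^d → ℝ` (defined on all of `(Fin d → ℝ)`,
with the copula conditions imposed on `[0,1]^d`) that is grounded, has uniform
one-dimensional margins, and is `d`-increasing. -/
def IsCopula (d : ℕ) (C : (Fin d → ℝ) → ℝ) : Prop :=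
  (∀ u : Fin d → ℝ, (∀ i, u i ∈ Set.Icc (0:ℝ) 1) → (∃ i, u i = 0) → C u = 0) ∧
  (∀ u : Fin d → ℝ, (∀ i, u i ∈ Set.Icc (0:ℝ) 1) →
    ∀ i : Fin d, (∀ j, j ≠ i → u j = 1) → C u = u i) ∧
  (∀ a b : Fin d → ℝ, (∀ i, a i ∈ Set.Icc (0:ℝ) 1) → (∀ i, b i ∈ Set.Icc (0:ℝ) 1) →
    (∀ i, a i ≤ b i) →
    0 ≤ ∑ S : Finset (Fin d),
        (-1 : ℝ) ^ (d - S.card) * C (fun k => if k ∈ S then b k else a k))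

open Finset Function

theorem forall_piecewise_mem_Icc {ι : Type*} {s : Finset ι} [∀ k, Decidable (k ∈ s)]
    {f g : ι → ℝ} (hf : ∀ k, f k ∈ Set.Icc (0:ℝ) 1) (hg : ∀ k, g k ∈ Set.Icc (0:ℝ) 1) :
    ∀ k, s.piecewise f g k ∈ Set.Icc (0:ℝ) 1 :=
  fun k => piecewise_cases s f g (· ∈ Set.Icc (0:ℝ) 1) (hf k) (hg k)

theorem forall_update_mem_Icc {ι : Type*} [DecidableEq ι] {x : ι → ℝ}
    (hx : ∀ k, x k ∈ Set.Icc (0:ℝ) 1) (i : ι) {t : ℝ} (ht : t ∈ Set.Icc (0:ℝ) 1) :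
    ∀ k, update x i t k ∈ Set.Icc (0:ℝ) 1 :=
  (forall_update_iff x fun _ v => v ∈ Set.Icc (0:ℝ) 1).mpr ⟨ht, fun k _ => hx k⟩

theorem sum_le_sum_of_card_le_of_sdiff_le {ι M : Type*} [DecidableEq ι] [AddCommGroup M]
    [LinearOrder M] [IsOrderedAddMonoid M] {S T : Finset ι} {f : ι → M} {c : M} (hc : 0 ≤ c)
    (hS : ∀ i ∈ S \ T, f i ≤ c) (hT : ∀ j ∈ T \ S, c ≤ f j) (hcard : #S ≤ #T) :
    ∑ i ∈ S, f i ≤ ∑ i ∈ T, f i := by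
  have hsdiff : ∑ i ∈ S \ T, f i ≤ ∑ i ∈ T \ S, f i :=
    calc ∑ i ∈ S \ T, f i ≤ #(S \ T) • c := sum_le_card_nsmul _ _ _ hS
      _ ≤ #(T \ S) • c := nsmul_le_nsmul_left hc (card_sdiff_le_card_sdiff_iff.mpr hcard)
      _ ≤ ∑ i ∈ T \ S, f i := card_nsmul_le_sum _ _ _ hT
  have := sum_sdiff_sub_sum_sdiff (s₁ := S) (s₂ := T) (f := f)
  rw [← sub_nonneg] at hsdiff ⊢
  rwa [this] at hsdiff

theorem Fin.card_filter_le_val (d m : ℕ) : #{i : Fin d | m ≤ (i : ℕ)} = d - m := by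
  have := card_filter_add_card_filter_not (s := (univ : Finset (Fin d)))
    (fun i : Fin d => (i : ℕ) < m)
  simp only [Fin.card_filter_val_lt, not_lt, card_univ, Fintype.card_fin] at this
  omega

theorem sum_sub_comp_perm_le {d : ℕ} (hd : 2 ≤ d) {f : Fin d → ℝ} (hf : Monotone f)
    (π : Equiv.Perm (Fin d)) (A : Finset (Fin d)) :
    ∑ k ∈ A, (f k - f (π k)) ≤
      ∑ i ∈ univ.filter (fun i : Fin d => (d + 1) / 2 ≤ (i : ℕ)), 
        (f i - f ⟨0, zero_lt_two.trans_le hd⟩) := by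
  set f₀ := f ⟨0, zero_lt_two.trans_le hd⟩
  set B := A.map π.toEmbedding
  have hcard : #(A \ B) = #(B \ A) := card_sdiff_comm (card_map _).symm
  have hhalf : 2 * #(A \ B) ≤ d := by
    have hunion := card_union_of_disjoint (disjoint_sdiff_sdiff (x := A) (y := B))
    have hle := card_le_univ (A \ B ∪ B \ A)
    rw [Fintype.card_fin] at hle
    omega
  have hlow : #(B \ A) • f₀ ≤ ∑ k ∈ B \ A, f k :=
    card_nsmul_le_sum _ _ _ fun k _ => hf (Fin.le_def.mpr (Nat.zero_le _))
  have hmd : (d + 1) / 2 < d := by omega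
  calc ∑ k ∈ A, (f k - f (π k))
      = ∑ k ∈ A \ B, f k - ∑ k ∈ B \ A, f k := by
        rw [sum_sub_distrib, sum_sdiff_sub_sum_sdiff, sum_map]; rfl
    _ ≤ ∑ k ∈ A \ B, (f k - f₀) := by
        rw [sum_sub_distrib, sum_const, hcard]; linarith
    _ ≤ _ := by
        refine sum_le_sum_of_card_le_of_sdiff_le (c := f ⟨_, hmd⟩ - f₀)
          (sub_nonneg.mpr (hf (Fin.le_def.mpr (Nat.zero_le _)))) ?_ ?_ ?_
        · intro i hi
          simp only [mem_sdiff, mem_filter, mem_univ, true_and, not_le] at hi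
          exact sub_le_sub_right (hf (Fin.le_def.mpr hi.2.le)) _
        · intro j hj
          simp only [mem_sdiff, mem_filter, mem_univ, true_and] at hj
          exact sub_le_sub_right (hf (Fin.le_def.mpr hj.1)) _
        · rw [Fin.card_filter_le_val]; omega

theorem sum_sub_min_comp_perm_le {d : ℕ} (hd : 2 ≤ d) {f : Fin d → ℝ} (hf : Monotone f)
    (π : Equiv.Perm (Fin d)) :
    ∑ k, (f k - min (f k) (f (π k))) ≤
      ∑ i ∈ univ.filter (fun i : Fin d => (d + 1) / 2 ≤ (i : ℕ)), 
        (f i - f ⟨0, zero_lt_two.trans_le hd⟩) := by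
  calc ∑ k, (f k - min (f k) (f (π k)))
      = ∑ k ∈ univ.filter (fun k => f (π k) < f k), (f k - f (π k)) := by
        rw [sum_filter]
        refine sum_congr rfl fun k _ => ?_
        split_ifs with h
        · rw [min_eq_right h.le]
        · rw [min_eq_left (not_lt.mp h), sub_self]
    _ ≤ _ := sum_sub_comp_perm_le hd hf π _

namespace IsCopula

variable {d : ℕ} {C : (Fin d → ℝ) → ℝ}

theorem sum_powerset_piecewise_nonneg (hC : IsCopula d C) {x b : Fin d → ℝ}
    (hx : ∀ k, x k ∈ Set.Icc (0:ℝ) 1) (hb : ∀ k, b k ∈ Set.Icc (0:ℝ) 1) (K : Finset (Fin d))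
    (hxb : ∀ k ∈ K, x k ≤ b k) :
    0 ≤ ∑ S ∈ K.powerset, (-1 : ℝ) ^ #S * C (S.piecewise x b) := by
  -- the `C`-volume of the box `[a, b]`, indexed by the coordinates taken from the lower corner
  set a := K.piecewise x 0
  have ha : ∀ k, a k ∈ Set.Icc (0:ℝ) 1 :=
    forall_piecewise_mem_Icc hx fun _ => ⟨le_rfl, zero_le_one⟩
  have hab : ∀ k, a k ≤ b k := fun k => by
    by_cases hk : k ∈ K <;> simp [a, hk, hxb, (hb k).1]
  calc (0 : ℝ)
      ≤ ∑ S : Finset (Fin d), (-1 : ℝ) ^ (d - #S) * C (S.piecewise b a) := hC.2.2 a b ha hb hab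
    _ = ∑ S : Finset (Fin d), (-1 : ℝ) ^ #S * C (S.piecewise a b) := by
        rw [← Equiv.sum_comp (compl_involutive.toPerm _)]
        refine sum_congr rfl fun S _ => ?_
        simp only [Involutive.coe_toPerm, card_compl, Fintype.card_fin,
          Nat.sub_sub_self (card_le_univ S |>.trans_eq (Fintype.card_fin d))]
        congr 2
        exact piecewise_compl _ _ _
    _ = ∑ S ∈ K.powerset, (-1 : ℝ) ^ #S * C (S.piecewise a b) := by
        refine (sum_subset (subset_univ _) fun S _ hS => ?_).symm
        obtain ⟨k, hkS, hkK⟩ := not_subset.mp (mt mem_powerset.mpr hS)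
        rw [hC.1 _ (forall_piecewise_mem_Icc ha hb) ⟨k, by simp [a, hkS, hkK]⟩, mul_zero]
    _ = _ := sum_congr rfl fun S hS => by
        rw [piecewise_piecewise_of_subset_left (mem_powerset.mp hS)]

theorem le_update (hC : IsCopula d C) {x : Fin d → ℝ} (hx : ∀ k, x k ∈ Set.Icc (0:ℝ) 1)
    {i : Fin d} {t : ℝ} (hxt : x i ≤ t) (ht : t ≤ 1) : C x ≤ C (update x i t) := by
  have h := hC.sum_powerset_piecewise_nonneg hx
    (forall_update_mem_Icc hx i ⟨(hx i).1.trans hxt, ht⟩) {i} (by simpa using hxt)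
  rw [← insert_empty_eq, sum_powerset_insert (notMem_empty i)] at h
  simpa [piecewise_insert] using h

theorem add_le_add_update (hC : IsCopula d C) {x : Fin d → ℝ} (hx : ∀ k, x k ∈ Set.Icc (0:ℝ) 1)
    {i j : Fin d} (hij : i ≠ j) {t q : ℝ} (hxt : x i ≤ t) (ht : t ≤ 1) (hxq : x j ≤ q)
    (hq : q ≤ 1) :
    C (update x i t) + C (update x j q) ≤ C (update (update x i t) j q) + C x := by
  have h := hC.sum_powerset_piecewise_nonneg hx
    (forall_update_mem_Icc (forall_update_mem_Icc hx i ⟨(hx i).1.trans hxt, ht⟩) j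
      ⟨(hx j).1.trans hxq, hq⟩)
    {i, j} (by simp [hij, hxt, hxq])
  rw [sum_powerset_insert (by simpa using hij), ← insert_empty_eq,
    sum_powerset_insert (notMem_empty j), sum_powerset_insert (notMem_empty j)] at h
  simp only [powerset_empty, sum_singleton, card_empty, card_singleton, card_insert_of_notMem,
    mem_singleton, hij, not_false_eq_true, piecewise_empty, piecewise_insert, insert_empty_eq,
    update_comm hij, update_idem, update_eq_self, pow_zero, pow_one, Nat.reduceAdd, even_two,
    Even.neg_pow, one_pow, one_mul, neg_mul] at h
  rw [update_comm (β := fun _ => ℝ) hij.symm q (x i), update_eq_self, ← update_comm hij] at h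
  linarith

theorem update_sub_le (hC : IsCopula d C) {x : Fin d → ℝ} (hx : ∀ k, x k ∈ Set.Icc (0:ℝ) 1)
    {i : Fin d} {t : ℝ} (hxt : x i ≤ t) (ht : t ≤ 1) : C (update x i t) - C x ≤ t - x i := by
  set X : Finset (Fin d) → Fin d → ℝ := fun T => T.piecewise 1 x
  have hX : ∀ T, ∀ k, X T k ∈ Set.Icc (0:ℝ) 1 :=
    fun T => forall_piecewise_mem_Icc (fun _ => ⟨zero_le_one, le_rfl⟩) hx
  -- raising the other coordinates to `1` can only increase the increment in coordinate `i`
  have hgrow : ∀ T, i ∉ T → C (update x i t) - C x ≤ C (update (X T) i t) - C (X T) := by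
    intro T
    induction T using Finset.induction_on with
    | empty => simp [X]
    | insert j T hjT ih =>
      intro hiT
      obtain ⟨hij, hiT⟩ : i ≠ j ∧ i ∉ T := by simpa using hiT
      have h := hC.add_le_add_update (hX T) hij (t := t) (q := 1)
        (by simpa [X, hiT] using hxt) ht (hX T j).2 le_rfl
      have hins : update (X T) j 1 = X (insert j T) := by simp [X, piecewise_insert]
      rw [update_comm (β := fun _ => ℝ) hij, hins] at h
      linarith [ih hiT]
  have hmargin : ∀ s ∈ Set.Icc (0:ℝ) 1, C (update (X (univ.erase i)) i s) = s := fun s hs => by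
    simpa using hC.2.1 _ (forall_update_mem_Icc (hX _) i hs) i fun k hk => by simp [X, hk]
  have h := hgrow (univ.erase i) (notMem_erase i univ)
  have hXi : update (X (univ.erase i)) i (x i) = X (univ.erase i) := by simp [X]
  rwa [hmargin t ⟨(hx i).1.trans hxt, ht⟩, ← hXi, hmargin (x i) (hx i)] at h

theorem sub_mem_Icc (hC : IsCopula d C) {v w : Fin d → ℝ} (hv : ∀ k, v k ∈ Set.Icc (0:ℝ) 1)
    (hw : ∀ k, w k ∈ Set.Icc (0:ℝ) 1) (hvw : ∀ k, v k ≤ w k) :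
    C w - C v ∈ Set.Icc 0 (∑ k, (w k - v k)) := by
  have key : ∀ T : Finset (Fin d),
      C (T.piecewise w v) - C v ∈ Set.Icc 0 (∑ k ∈ T, (w k - v k)) := by
    intro T
    induction T using Finset.induction_on with
    | empty => simp
    | insert j T hjT ih =>
      have hXj : T.piecewise w v j = v j := piecewise_eq_of_notMem _ _ _ hjT
      have hX := forall_piecewise_mem_Icc (s := T) hw hv
      have hmono := hC.le_update hX (i := j) (hXj ▸ hvw j) (hw j).2
      have hlip := hC.update_sub_le hX (i := j) (hXj ▸ hvw j) (hw j).2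
      rw [hXj] at hlip
      rw [piecewise_insert, sum_insert hjT]
      constructor <;> linarith [ih.1, ih.2]
  simpa using key univ

end IsCopula

/-- Indices are 0-based: the sum runs over `⌈d/2⌉ = (d + 1) / 2 ≤ i ≤ d - 1`. -/
theorem improved_bound (d : ℕ) (hd : 2 ≤ d)
    (u : Fin d → ℝ) (hu : ∀ i, u i ∈ Set.Icc (0:ℝ) 1)
    (hmono : ∀ i j : Fin d, i ≤ j → u i ≤ u j)
    (C : (Fin d → ℝ) → ℝ) (hC : IsCopula d C)
    (π : Equiv.Perm (Fin d)) :
    |C u - C (u ∘ π)| ≤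
      ∑ i ∈ Finset.univ.filter (fun i : Fin d => (d + 1) / 2 ≤ (i : ℕ)),
        (u i - u ⟨0, by omega⟩) := by
  set z : Fin d → ℝ := fun k => min (u k) (u (π k))
  have hz : ∀ k, z k ∈ Set.Icc (0:ℝ) 1 :=
    fun k => ⟨le_min (hu k).1 (hu (π k)).1, (min_le_left _ _).trans (hu k).2⟩
  have hu' := hC.sub_mem_Icc hz hu fun k => min_le_left _ _
  have huπ := hC.sub_mem_Icc (w := u ∘ π) hz (fun k => hu (π k)) fun k => min_le_right _ _
  have hsum : ∑ k, ((u ∘ π) k - z k) = ∑ k, (u k - z k) := by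
    simp only [sum_sub_distrib, comp_apply, Equiv.sum_comp]
  rw [hsum] at huπ
  calc |C u - C (u ∘ π)| ≤ ∑ k, (u k - z k) :=
        abs_sub_le_iff.mpr ⟨by linarith [hu'.2, huπ.1], by linarith [hu'.1, huπ.2]⟩
    _ ≤ _ := sum_sub_min_comp_perm_le hd hmono π
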